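/- Completeness of the tuple-pattern inference algorithm: let x⃗ = (x₁,…,xₙ) be pairwise distinct variables, M learning data with n columns, and t a solvable tuple pattern of arity n. If M ⊨ₛ t, then ((x₁,…,xₙ), [M/x⃗]) ⟶* (t, Θ) for some data-substitution Θ (where t is identified up to renaming of its variables). -/

import Mathlib

namespace STPaper

variable {A V : Type}

/-- A word over the alphabet `A`. -/
abbrev Word (A : Type) := List A

/-- A pattern: a finite word over `A ⊕ V` (letters and variables). -/
abbrev Pat (A V : Type) := List (A ⊕ V)

/-- A tuple pattern: a finite tuple of patterns. -/
abbrev TP (A V : Type) := List (Pat A V)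

/-- A column of learning data: one word per row. -/
abbrev Col (A : Type) := List (Word A)

/-- Learning data, represented as its list of columns. -/
abbrev Data (A : Type) := List (Col A)

/-- A data-substitution `[M/x⃗]`: the number `m` of rows together with the list pairing each
variable of `x⃗` with the corresponding column of `M`. -/
structure DSub (A V : Type) where
  m : ℕ
  entries : List (V × Col A)

/-- Apply a word-valued substitution to a pattern. -/
def substPatW (θ : V → Word A) (p : Pat A V) : Word A :=
  (p.map (Sum.elim (fun a => [a]) θ)).flatten

/-- Look up the column assigned to a variable by a data-substitution (default: all-ε). -/
def lookupCol [DecidableEq V] (E : List (V × Col A)) (x : V) : Col A :=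
  match E.find? (fun e => decide (e.1 = x)) with
  | some e => e.2
  | none => []

/-- The substitution corresponding to the `i`-th row of a data-substitution. -/
def DSub.rowSub [DecidableEq V] (Θ : DSub A V) (i : ℕ) : V → Word A :=
  fun x => (lookupCol Θ.entries x).getD i []

/-- `Θ.apply t` : the matrix `Θt` (as a list of columns, each of length `Θ.m`). -/
def DSub.apply [DecidableEq V] (Θ : DSub A V) (t : TP A V) : Data A :=
  t.map (fun p => (List.range Θ.m).map (fun i => substPatW (Θ.rowSub i) p))

/-- Well-formedness of a data-substitution: pairwise-distinct variables and
all columns of length `m`. -/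
def DSub.WF (Θ : DSub A V) : Prop :=
  (Θ.entries.map Prod.fst).Nodup ∧ ∀ e ∈ Θ.entries, e.2.length = Θ.m

/-- The free variables of a tuple pattern. -/
def fvTP (t : TP A V) : Set V := {x | Sum.inr x ∈ t.flatten}

/-- Substitution of a single pattern `q` for the variable `x` in a pattern. -/
def substVar [DecidableEq A] [DecidableEq V] (x : V) (q : Pat A V) (p : Pat A V) : Pat A V :=
  (p.map (fun s => if s = Sum.inr x then q else [s])).flatten

/-- Substitution of a single pattern `q` for the variable `x` in a tuple pattern. -/
def substVarTP [DecidableEq A] [DecidableEq V] (x : V) (q : Pat A V) (t : TP A V) : TP A V :=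
  t.map (substVar x q)

/-- Simultaneous substitution `[qs/xs]p` of the patterns `qs` for the variables `xs`. -/
def substVars [DecidableEq V] (xs : List V) (qs : List (Pat A V)) (p : Pat A V) : Pat A V :=
  (p.map (fun s =>
    match s with
    | Sum.inl a => [Sum.inl a]
    | Sum.inr x =>
      match (xs.zip qs).find? (fun e => decide (e.1 = x)) with
      | some e => e.2
      | none => [Sum.inr x])).flatten

/-- Simultaneous substitution `[qs/xs]t` on a tuple pattern. -/
def substVarsTP [DecidableEq V] (xs : List V) (qs : List (Pat A V)) (t : TP A V) : TP A V :=
  t.map (substVars xs qs)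

/-- A column is the all-ε column. -/
def allEps (c : Col A) : Prop := ∀ w ∈ c, w = []

/-- The trivial tuple pattern `(x₁, …, xₙ)`. -/
def trivTP (xs : List V) : TP A V := xs.map (fun x => [Sum.inr x])

section
variable [DecidableEq A] [DecidableEq V]

/-- The rewriting relation ⟶ on pairs of a tuple pattern and a data-substitution. -/
inductive Step : (TP A V × DSub A V) → (TP A V × DSub A V) → Prop
  | pre (t : TP A V) (m : ℕ) (E : List (V × Col A)) (i j : ℕ)
      (hi : i < E.length) (hj : j < E.length) (hij : i ≠ j)
      (s : Col A) (hslen : s.length = (E[i]'hi).2.length)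
      (hpre : (E[j]'hj).2 = List.zipWith (· ++ ·) (E[i]'hi).2 s)
      (hne : ¬ allEps (E[i]'hi).2)
      (x' : V) (hx1 : x' ∉ E.map Prod.fst) (hx2 : Sum.inr x' ∉ t.flatten) :
      Step (t, ⟨m, E⟩)
        (substVarTP (E[j]'hj).1 [Sum.inr (E[i]'hi).1, Sum.inr x'] t,
         ⟨m, E.set j (x', s)⟩)
  | cpre (t : TP A V) (m : ℕ) (E : List (V × Col A)) (j : ℕ)
      (hj : j < E.length) (a : A) (s : Col A)
      (hpre : (E[j]'hj).2 = s.map (fun w => a :: w))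
      (x' : V) (hx1 : x' ∉ E.map Prod.fst) (hx2 : Sum.inr x' ∉ t.flatten) :
      Step (t, ⟨m, E⟩)
        (substVarTP (E[j]'hj).1 [Sum.inl a, Sum.inr x'] t, ⟨m, E.set j (x', s)⟩)
  | eps (t : TP A V) (m : ℕ) (E : List (V × Col A)) (j : ℕ)
      (hj : j < E.length) (heps : allEps (E[j]'hj).2) :
      Step (t, ⟨m, E⟩) (substVarTP (E[j]'hj).1 [] t, ⟨m, E.eraseIdx j⟩)

/-- `n`-step rewriting. -/
def StepN : ℕ → (TP A V × DSub A V) → (TP A V × DSub A V) → Prop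
  | 0 => fun c₁ c₂ => c₁ = c₂
  | n + 1 => fun c₁ c₃ => ∃ c₂, Step c₁ c₂ ∧ StepN n c₂ c₃

end

/-- The reduction relation ⇒ on tuple patterns. -/
inductive PStep : TP A V → TP A V → Prop
  | pre (t : TP A V) (i j : ℕ) (hi : i < t.length) (hj : j < t.length)
      (hij : i ≠ j) (p' : Pat A V)
      (hdec : t[j]'hj = (t[i]'hi) ++ p') (hne : t[i]'hi ≠ []) :
      PStep t (t.set j p')
  | cpre (t : TP A V) (j : ℕ) (hj : j < t.length) (a : A) (p' : Pat A V)
      (hdec : t[j]'hj = Sum.inl a :: p') :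
      PStep t (t.set j p')
  | eps (t : TP A V) (j : ℕ) (hj : j < t.length) (heps : t[j]'hj = []) :
      PStep t (t.eraseIdx j)

/-- A tuple pattern is solvable if it reduces to a trivial tuple of pairwise
distinct variables. -/
def Solvable (t : TP A V) : Prop :=
  ∃ ys : List V, ys.Nodup ∧ Relation.ReflTransGen PStep t (trivTP ys)

/-- The language of a tuple pattern. -/
def lang (t : TP A V) : Set (List (Word A)) :=
  {w | ∃ θ : V → Word A, w = t.map (substPatW θ)}

/-- `M ⊨ t` : there is a data-substitution `Θ` (with `rows` rows) with `Θt = M`. -/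
def Models [DecidableEq V] (M : Data A) (rows : ℕ) (t : TP A V) : Prop :=
  ∃ Θ : DSub A V, Θ.m = rows ∧ Θ.WF ∧ Θ.apply t = M

/-- `M ⊨ₛ t` : additionally, no variable of `t` is mapped to ε in every row. -/
def SModels [DecidableEq V] (M : Data A) (rows : ℕ) (t : TP A V) : Prop :=
  ∃ Θ : DSub A V, Θ.m = rows ∧ Θ.WF ∧ Θ.apply t = M ∧
    ∀ x ∈ fvTP t, ¬ allEps (lookupCol Θ.entries x)

/-- Renaming the variables of a tuple pattern. -/
def renameTP (ρ : V → V) (t : TP A V) : TP A V :=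
  t.map (List.map (Sum.map id ρ))

/-- The measure `#t` of a tuple pattern. -/
def tpMeasure (t : TP A V) : ℕ := (t.map List.length).sum + t.length

/-- `size(M)`. -/
def dataSize (M : Data A) : ℕ :=
  (M.map (fun c => (c.map (fun w => w.length + 1)).sum)).sum

/-- Learning data (as columns) whose rows enumerate the given list of tuples. -/
def colsOfRows (n : ℕ) (rows : List (List (Word A))) : Data A :=
  (List.range n).map (fun j => rows.map (fun r => r.getD j []))

/-- `m ⊨ₛ t` for a (possibly infinite) set of tuples of words. -/
def SetSModels (S : Set (List (Word A))) (t : TP A V) : Prop :=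
  ∃ θ : S → V → Word A,
    (∀ v : S, (v : List (Word A)) = t.map (substPatW (θ v))) ∧
    ∀ x ∈ fvTP t, ∃ v : S, θ v x ≠ []

/-- A rule instance of the ⇒ relation. -/
inductive RuleInst (A V : Type) where
  | pre (i j : ℕ)
  | cpre (j : ℕ) (a : A)
  | eps (j : ℕ)

/-- The reduction step derived by a given rule instance. -/
def RuleStep : RuleInst A V → TP A V → TP A V → Prop
  | .pre i j, t, t' => ∃ (hi : i < t.length) (hj : j < t.length),
      i ≠ j ∧ t[i]'hi ≠ [] ∧ ∃ p', t[j]'hj = (t[i]'hi) ++ p' ∧ t' = t.set j p'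
  | .cpre j a, t, t' => ∃ (_ : j < t.length) (p' : Pat A V),
      t.getD j [] = Sum.inl a :: p' ∧ t' = t.set j p'
  | .eps j, t, t' => ∃ (_ : j < t.length), t.getD j [] = ([] : Pat A V) ∧ t' = t.eraseIdx j

/-- Well-definedness of the residual of a tuple pattern along a rule instance. -/
def ResDefined : RuleInst A V → TP A V → Prop
  | .pre i j, t => i < t.length ∧ j < t.length ∧ (t.getD i []) <+: (t.getD j [])
  | .cpre j a, t => j < t.length ∧ ∃ p', t.getD j [] = Sum.inl a :: p'
  | .eps j, t => j < t.length ∧ t.getD j [] = ([] : Pat A V)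

/-- The residual of a tuple pattern along a rule instance. -/
def residual : RuleInst A V → TP A V → TP A V
  | .pre i j, t => t.set j ((t.getD j []).drop (t.getD i []).length)
  | .cpre j _, t => t.set j ((t.getD j []).drop 1)
  | .eps j, t => t.eraseIdx j

/-- The reduction relation ⇒ extended with the postfix rules. -/
inductive PStepX : TP A V → TP A V → Prop
  | pre (t : TP A V) (i j : ℕ) (hi : i < t.length) (hj : j < t.length)
      (hij : i ≠ j) (p' : Pat A V)
      (hdec : t[j]'hj = (t[i]'hi) ++ p') (hne : t[i]'hi ≠ []) :
      PStepX t (t.set j p')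
  | cpre (t : TP A V) (j : ℕ) (hj : j < t.length) (a : A) (p' : Pat A V)
      (hdec : t[j]'hj = Sum.inl a :: p') :
      PStepX t (t.set j p')
  | eps (t : TP A V) (j : ℕ) (hj : j < t.length) (heps : t[j]'hj = []) :
      PStepX t (t.eraseIdx j)
  | post (t : TP A V) (i j : ℕ) (hi : i < t.length) (hj : j < t.length)
      (hij : i ≠ j) (p' : Pat A V)
      (hdec : t[j]'hj = p' ++ (t[i]'hi)) (hne : t[i]'hi ≠ []) :
      PStepX t (t.set j p')
  | cpost (t : TP A V) (j : ℕ) (hj : j < t.length) (a : A) (p' : Pat A V)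
      (hdec : t[j]'hj = p' ++ [Sum.inl a]) :
      PStepX t (t.set j p')

section Aux

open List

variable {A V : Type}

/-! ### Pattern substitution -/

/-- Pattern-valued substitution. -/
def substPat (σ : V → Pat A V) (p : Pat A V) : Pat A V :=
  (p.map (Sum.elim (fun a => [Sum.inl a]) σ)).flatten

@[simp] lemma substPat_nil (σ : V → Pat A V) : substPat σ ([] : Pat A V) = [] := rfl

@[simp] lemma substPat_cons_inl (σ : V → Pat A V) (a : A) (p : Pat A V) :
    substPat σ (Sum.inl a :: p) = Sum.inl a :: substPat σ p := rfl

@[simp] lemma substPat_cons_inr (σ : V → Pat A V) (x : V) (p : Pat A V) :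
    substPat σ (Sum.inr x :: p) = σ x ++ substPat σ p := rfl

lemma substPat_append (σ : V → Pat A V) (p q : Pat A V) :
    substPat σ (p ++ q) = substPat σ p ++ substPat σ q := by
  simp [substPat]

lemma substPat_comp (σ τ : V → Pat A V) (p : Pat A V) :
    substPat σ (substPat τ p) = substPat (fun x => substPat σ (τ x)) p := by
  induction p with
  | nil => rfl
  | cons s p ih =>
    cases s with
    | inl a => simp [ih]
    | inr x => simp [substPat_append, ih]

lemma substPat_congr {σ τ : V → Pat A V} {p : Pat A V}
    (h : ∀ x, Sum.inr x ∈ p → σ x = τ x) : substPat σ p = substPat τ p := by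
  induction p with
  | nil => rfl
  | cons s p ih =>
    cases s with
    | inl a => simp [ih fun x hx => h x (by simp [hx])]
    | inr x => simp [h x (by simp), ih fun y hy => h y (by simp [hy])]

lemma substPat_singles {σ : V → Pat A V} {g : V → V} {p : Pat A V}
    (h : ∀ x, Sum.inr x ∈ p → σ x = [Sum.inr (g x)]) :
    substPat σ p = p.map (Sum.map id g) := by
  induction p with
  | nil => rfl
  | cons s p ih =>
    cases s with
    | inl a => simp [ih fun x hx => h x (by simp [hx])]
    | inr x => simp [h x (by simp), ih fun y hy => h y (by simp [hy])]

lemma map_rename_id {f : V → V} {p : Pat A V} (h : ∀ x, Sum.inr x ∈ p → f x = x) :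
    p.map (Sum.map id f) = p := by
  induction p with
  | nil => rfl
  | cons s p ih =>
    cases s with
    | inl a => simp [ih fun x hx => h x (by simp [hx])]
    | inr x => simp [h x (by simp), ih fun y hy => h y (by simp [hy])]

lemma mem_substPat {σ : V → Pat A V} {p : Pat A V} {x : V}
    (h : Sum.inr x ∈ substPat σ p) : ∃ y, Sum.inr y ∈ p ∧ Sum.inr x ∈ σ y := by
  induction p with
  | nil => simp [substPat] at h
  | cons s p ih =>
    cases s with
    | inl a =>
      simp only [substPat_cons_inl, List.mem_cons] at h
      rcases h with h | h
      · exact absurd h (by simp)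
      · obtain ⟨y, hy, hxy⟩ := ih h
        exact ⟨y, by simp [hy], hxy⟩
    | inr y =>
      simp only [substPat_cons_inr, List.mem_append] at h
      rcases h with h | h
      · exact ⟨y, by simp, h⟩
      · obtain ⟨z, hz, hxz⟩ := ih h
        exact ⟨z, by simp [hz], hxz⟩

/-! ### Word substitution -/

@[simp] lemma substPatW_nil (θ : V → Word A) : substPatW θ ([] : Pat A V) = [] := rfl

@[simp] lemma substPatW_cons_inl (θ : V → Word A) (a : A) (p : Pat A V) :
    substPatW θ (Sum.inl a :: p) = a :: substPatW θ p := rfl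

@[simp] lemma substPatW_cons_inr (θ : V → Word A) (x : V) (p : Pat A V) :
    substPatW θ (Sum.inr x :: p) = θ x ++ substPatW θ p := rfl

lemma substPatW_append (θ : V → Word A) (p q : Pat A V) :
    substPatW θ (p ++ q) = substPatW θ p ++ substPatW θ q := by
  simp [substPatW]

lemma substPatW_rename (θ : V → Word A) (ρ : V → V) (p : Pat A V) :
    substPatW θ (p.map (Sum.map id ρ)) = substPatW (fun x => θ (ρ x)) p := by
  induction p with
  | nil => rfl
  | cons s p ih => cases s <;> simp [ih]

lemma substPatW_ne_nil {θ : V → Word A} {p : Pat A V} {x : V}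
    (hx : Sum.inr x ∈ p) (hθ : θ x ≠ []) : substPatW θ p ≠ [] := by
  induction p with
  | nil => simp at hx
  | cons s p ih =>
    cases s with
    | inl a => simp
    | inr y =>
      rcases List.mem_cons.1 hx with h | h
      · cases h; simp [hθ]
      · intro hcontra
        rcases List.append_eq_nil_iff.mp (by simpa using hcontra) with ⟨h1, h2⟩
        exact ih h h2

end Aux
section Aux2

open List

variable {A V : Type}

/-! ### The assignment function underlying `substVars` -/

def assign [DecidableEq V] (zs : List V) (qs : List (Pat A V)) (x : V) : Pat A V :=
  match (zs.zip qs).find? (fun e => decide (e.1 = x)) with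
  | some e => e.2
  | none => [Sum.inr x]

lemma substVars_eq_substPat [DecidableEq V] (zs : List V) (qs : List (Pat A V)) (p : Pat A V) :
    substVars zs qs p = substPat (assign zs qs) p := by
  unfold substVars substPat assign
  congr 1
  apply List.map_congr_left
  intro s _
  cases s <;> rfl

lemma substVar_eq_substPat [DecidableEq A] [DecidableEq V] (x : V) (q : Pat A V) (p : Pat A V) :
    substVar x q p = substPat (fun y => if y = x then q else [Sum.inr y]) p := by
  unfold substVar substPat
  congr 1
  apply List.map_congr_left
  intro s _
  cases s with
  | inl a => simp
  | inr y => by_cases h : y = x <;> simp [h]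

lemma assign_not_mem [DecidableEq V] {zs : List V} (qs : List (Pat A V)) {x : V}
    (hx : x ∉ zs) : assign zs qs x = [Sum.inr x] := by
  unfold assign
  have : (zs.zip qs).find? (fun e => decide (e.1 = x)) = none := by
    rw [List.find?_eq_none]
    rintro ⟨z, q⟩ hzq
    have := List.of_mem_zip hzq
    simp only [decide_eq_true_eq]
    rintro rfl
    exact hx this.1
  rw [this]

lemma assign_getElem [DecidableEq V] {zs : List V} {qs : List (Pat A V)}
    (hn : zs.Nodup) (hlen : zs.length = qs.length) {l : ℕ} (hl : l < zs.length) :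
    assign zs qs (zs[l]'hl) = qs[l]'(hlen ▸ hl) := by
  induction zs generalizing qs l with
  | nil => simp at hl
  | cons z zs ih =>
    cases qs with
    | nil => simp at hlen
    | cons q qs =>
      cases l with
      | zero => simp [assign]
      | succ l =>
        have hz : z ∉ zs := (List.nodup_cons.1 hn).1
        have hl' : l < zs.length := by simpa using hl
        have hne : ¬ (z = zs[l]'hl') := fun h => hz (h ▸ List.getElem_mem hl')
        have : assign (z :: zs) (q :: qs) ((z :: zs)[l+1]) =
            assign zs qs (zs[l]'hl') := by
          simp only [assign, List.zip_cons_cons, List.find?_cons]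
          simp [hne]
        rw [this, ih (List.nodup_cons.1 hn).2 (by simpa using hlen) hl']
        simp

/-! ### List helpers -/

lemma zip_set {α β : Type} (zs : List α) (cs : List β) (j : ℕ) (x : α) (c : β) :
    (zs.zip cs).set j (x, c) = (zs.set j x).zip (cs.set j c) := by
  induction zs generalizing cs j with
  | nil => simp
  | cons z zs ih =>
    cases cs with
    | nil => simp
    | cons d cs =>
      cases j with
      | zero => simp
      | succ j => simp [ih]

lemma zip_eraseIdx {α β : Type} (zs : List α) (cs : List β) (h : zs.length = cs.length) (j : ℕ) :
    (zs.zip cs).eraseIdx j = (zs.eraseIdx j).zip (cs.eraseIdx j) := by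
  induction zs generalizing cs j with
  | nil => simp
  | cons z zs ih =>
    cases cs with
    | nil => simp at h
    | cons d cs =>
      cases j with
      | zero => simp
      | succ j => simp [ih cs (by simpa using h)]

lemma map_eraseIdx {α β : Type} (f : α → β) (l : List α) (j : ℕ) :
    (l.eraseIdx j).map f = (l.map f).eraseIdx j := by
  induction l generalizing j with
  | nil => simp
  | cons a l ih =>
    cases j with
    | zero => simp
    | succ j => simp [ih]

lemma nodup_set {zs : List V} {x : V} (hn : zs.Nodup) (hx : x ∉ zs) (j : ℕ) :
    (zs.set j x).Nodup := by
  induction zs generalizing j with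
  | nil => simp
  | cons z zs ih =>
    cases j with
    | zero =>
      simp only [List.set_cons_zero, List.nodup_cons]
      exact ⟨fun h => hx (by simp [h]), (List.nodup_cons.1 hn).2⟩
    | succ j =>
      simp only [List.set_cons_succ, List.nodup_cons]
      refine ⟨fun h => ?_, ih (List.nodup_cons.1 hn).2 (fun h => hx (by simp [h]) ) j⟩
      rcases List.mem_or_eq_of_mem_set h with h' | h'
      · exact (List.nodup_cons.1 hn).1 h'
      · exact hx (by simp [h'])

lemma mem_set_self {zs : List V} {x : V} {j : ℕ} (hj : j < zs.length) : x ∈ zs.set j x := by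
  have h1 : (zs.set j x)[j]'(by simpa using hj) ∈ zs.set j x := List.getElem_mem _
  rwa [List.getElem_set_self _] at h1

lemma mem_set_of_mem_ne {zs : List V} {y x : V} {j : ℕ} (hj : j < zs.length)
    (hy : y ∈ zs) (hne : y ≠ zs[j]'hj) : y ∈ zs.set j x := by
  obtain ⟨l, hl, rfl⟩ := List.getElem_of_mem hy
  have hlj : l ≠ j := fun h => hne (by simp [h])
  have h1 : (zs.set j x)[l]'(by simpa using hl) ∈ zs.set j x := List.getElem_mem _
  rwa [List.getElem_set_ne (by omega) _] at h1

lemma mem_eraseIdx_of_mem_ne {zs : List V} (hn : zs.Nodup) {y : V} {j : ℕ} (hj : j < zs.length)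
    (hy : y ∈ zs) (hne : y ≠ zs[j]'hj) : y ∈ zs.eraseIdx j := by
  obtain ⟨l, hl, rfl⟩ := List.getElem_of_mem hy
  have hlj : l ≠ j := fun h => hne (by simp [h])
  exact List.mem_eraseIdx_iff_getElem.2 ⟨l, hl, hlj, rfl⟩

/-- variables occurring in a tuple pattern, as a list -/
def varsOf (t : TP A V) : List V := t.flatten.filterMap (fun s => s.getRight?)

lemma mem_varsOf {t : TP A V} {x : V} : x ∈ varsOf t ↔ Sum.inr x ∈ t.flatten := by
  simp only [varsOf, List.mem_filterMap]
  constructor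
  · rintro ⟨s, hs, h⟩
    cases s with
    | inl a => simp [Sum.getRight?] at h
    | inr y => simp [Sum.getRight?] at h; exact h ▸ hs
  · intro h
    exact ⟨Sum.inr x, h, rfl⟩

lemma exists_fresh [DecidableEq V] [Infinite V] (l : List V) : ∃ x : V, x ∉ l := by
  obtain ⟨x, hx⟩ := Infinite.exists_notMem_finset l.toFinset
  exact ⟨x, fun h => hx (List.mem_toFinset.2 h)⟩

/-! ### Columns generated by a row-indexed substitution -/

def colOf (θ : ℕ → V → Word A) (m : ℕ) (p : Pat A V) : Col A :=
  (List.range m).map (fun i => substPatW (θ i) p)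

def colsOf (θ : ℕ → V → Word A) (m : ℕ) (t : TP A V) : Data A := t.map (colOf θ m)

@[simp] lemma colsOf_length (θ : ℕ → V → Word A) (m : ℕ) (t : TP A V) :
    (colsOf θ m t).length = t.length := by simp [colsOf]

@[simp] lemma colOf_length (θ : ℕ → V → Word A) (m : ℕ) (p : Pat A V) :
    (colOf θ m p).length = m := by simp [colOf]

lemma colsOf_getElem (θ : ℕ → V → Word A) (m : ℕ) (t : TP A V) {j : ℕ} (hj : j < t.length) :
    (colsOf θ m t)[j]'(by simpa using hj) = colOf θ m (t[j]'hj) := by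
  simp [colsOf]

lemma colsOf_set (θ : ℕ → V → Word A) (m : ℕ) (t : TP A V) (j : ℕ) (p : Pat A V) :
    colsOf θ m (t.set j p) = (colsOf θ m t).set j (colOf θ m p) := by
  simp [colsOf, List.map_set]

lemma colsOf_eraseIdx (θ : ℕ → V → Word A) (m : ℕ) (t : TP A V) (j : ℕ) :
    colsOf θ m (t.eraseIdx j) = (colsOf θ m t).eraseIdx j := by
  simp [colsOf, map_eraseIdx]

end Aux2
section Aux3

open List

variable {A V : Type}

lemma fv_substVarTP [DecidableEq A] [DecidableEq V] {z : V} {q : Pat A V} {u : TP A V} {x : V}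
    (h : Sum.inr x ∈ (substVarTP z q u).flatten) :
    Sum.inr x ∈ q ∨ (Sum.inr x ∈ u.flatten ∧ x ≠ z) := by
  rw [List.mem_flatten] at h
  obtain ⟨l, hl, hxl⟩ := h
  rw [substVarTP, List.mem_map] at hl
  obtain ⟨p, hp, rfl⟩ := hl
  rw [substVar_eq_substPat] at hxl
  obtain ⟨y, hy, hxy⟩ := mem_substPat hxl
  by_cases hyz : y = z
  · rw [if_pos hyz] at hxy
    exact Or.inl hxy
  · rw [if_neg hyz] at hxy
    simp only [List.mem_singleton, Sum.inr.injEq] at hxy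
    subst hxy
    exact Or.inr ⟨List.mem_flatten.2 ⟨p, hp, hy⟩, hyz⟩

lemma fv_set_subset {t : TP A V} {j : ℕ} (hj : j < t.length) {p : Pat A V}
    (hsub : ∀ s, s ∈ p → s ∈ t[j]'hj) {x : V}
    (h : Sum.inr x ∈ (t.set j p).flatten) : Sum.inr x ∈ t.flatten := by
  rw [List.mem_flatten] at h
  obtain ⟨l, hl, hxl⟩ := h
  rcases List.mem_or_eq_of_mem_set hl with h' | h'
  · exact List.mem_flatten.2 ⟨l, h', hxl⟩
  · subst h'
    exact List.mem_flatten.2 ⟨t[j]'hj, List.getElem_mem _, hsub _ hxl⟩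

lemma fv_eraseIdx_subset {t : TP A V} {j : ℕ} {x : V}
    (h : Sum.inr x ∈ (t.eraseIdx j).flatten) : Sum.inr x ∈ t.flatten := by
  rw [List.mem_flatten] at h
  obtain ⟨l, hl, hxl⟩ := h
  obtain ⟨i, hi, _, rfl⟩ := List.mem_eraseIdx_iff_getElem.1 hl
  exact List.mem_flatten.2 ⟨_, List.getElem_mem _, hxl⟩

lemma assign_eraseIdx [DecidableEq V] {zs : List V} {t : TP A V} (hn : zs.Nodup)
    (hlen : zs.length = t.length) {l j : ℕ} (hl : l < zs.length) (hlj : l ≠ j)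
    (hj : j < zs.length) :
    assign (zs.eraseIdx j) (t.eraseIdx j) (zs[l]'hl) = t[l]'(hlen ▸ hl) := by
  have hnlen : (zs.eraseIdx j).length = (t.eraseIdx j).length := by
    rw [List.length_eraseIdx, List.length_eraseIdx, hlen]
  have hn' : (zs.eraseIdx j).Nodup := hn.eraseIdx j
  rcases Nat.lt_or_ge l j with h | h
  · have hb : l < (zs.eraseIdx j).length := by
      rw [List.length_eraseIdx]; simp only [hj, if_true]; omega
    have e1 : (zs.eraseIdx j)[l]'hb = zs[l]'hl := by
      rw [List.getElem_eraseIdx]; rw [dif_pos h]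
    have e2 : (t.eraseIdx j)[l]'(hnlen ▸ hb) = t[l]'(hlen ▸ hl) := by
      rw [List.getElem_eraseIdx]; rw [dif_pos h]
    rw [← e1, assign_getElem hn' hnlen hb, e2]
  · have h' : j < l := lt_of_le_of_ne h (Ne.symm hlj)
    cases l with
    | zero => omega
    | succ k =>
      have hb : k < (zs.eraseIdx j).length := by
        rw [List.length_eraseIdx]; simp only [hj, if_true]; omega
      have e1 : (zs.eraseIdx j)[k]'hb = zs[k+1]'hl := by
        rw [List.getElem_eraseIdx]; rw [dif_neg (by omega)]
      have e2 : (t.eraseIdx j)[k]'(hnlen ▸ hb) = t[k+1]'(hlen ▸ hl) := by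
        rw [List.getElem_eraseIdx]; rw [dif_neg (by omega)]
      rw [← e1, assign_getElem hn' hnlen hb, e2]

/-- The run invariant. -/
structure Inv [DecidableEq V] (θ : ℕ → V → Word A) (m : ℕ) (tgt : TP A V)
    (t : TP A V) (zs : List V) (u : TP A V) : Prop where
  nodup : zs.Nodup
  len : zs.length = t.length
  fvu : ∀ x, Sum.inr x ∈ u.flatten → x ∈ zs
  disj : ∀ x, Sum.inr x ∈ t.flatten → x ∉ zs
  strict : ∀ x, Sum.inr x ∈ t.flatten → ∃ i, i < m ∧ θ i x ≠ []
  eq : substVarsTP zs t u = tgt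

lemma substVarsTP_step [DecidableEq A] [DecidableEq V] {zs zs' : List V} {t t' : TP A V}
    (hn : zs.Nodup) (hlen : zs.length = t.length)
    {j : ℕ} (hj : j < zs.length) (q : Pat A V)
    (hq : substPat (assign zs' t') q = t[j]'(hlen ▸ hj))
    (hother : ∀ l (hl : l < zs.length), l ≠ j →
      assign zs' t' (zs[l]'hl) = t[l]'(hlen ▸ hl))
    (u : TP A V) (hfvu : ∀ x, Sum.inr x ∈ u.flatten → x ∈ zs) :
    substVarsTP zs' t' (substVarTP (zs[j]'hj) q u) = substVarsTP zs t u := by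
  unfold substVarsTP substVarTP
  rw [List.map_map]
  apply List.map_congr_left
  intro p hp
  simp only [Function.comp_apply]
  rw [substVars_eq_substPat, substVar_eq_substPat, substVars_eq_substPat, substPat_comp]
  apply substPat_congr
  intro x hx
  have hxzs : x ∈ zs := hfvu x (List.mem_flatten.2 ⟨p, hp, hx⟩)
  obtain ⟨l, hl, rfl⟩ := List.getElem_of_mem hxzs
  by_cases hlj : l = j
  · subst hlj
    rw [if_pos rfl]
    rw [hq, assign_getElem hn hlen hl]
  · have hne : zs[l]'hl ≠ zs[j]'hj := fun h => hlj ((List.Nodup.getElem_inj_iff hn).1 h)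
    rw [if_neg hne]
    simp only [substPat_cons_inr, substPat_nil, List.append_nil]
    rw [hother l hl hlj, assign_getElem hn hlen hl]

lemma colOf_append (θ : ℕ → V → Word A) (m : ℕ) (p q : Pat A V) :
    colOf θ m (p ++ q) = List.zipWith (· ++ ·) (colOf θ m p) (colOf θ m q) := by
  unfold colOf
  rw [List.zipWith_map, List.zipWith_self]
  apply List.map_congr_left
  intro i _
  exact substPatW_append _ _ _

end Aux3
section Aux4

open List

variable {A V : Type} [DecidableEq A] [DecidableEq V] [Infinite V]

lemma sim_cpre {θ : ℕ → V → Word A} {m : ℕ} {tgt t : TP A V} {zs : List V} {u : TP A V}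
    (inv : Inv θ m tgt t zs u) {j : ℕ} (hj : j < t.length) {a : A} {rest : Pat A V}
    (hdec : t[j]'hj = Sum.inl a :: rest) :
    ∃ zs' u', Step (u, ⟨m, zs.zip (colsOf θ m t)⟩)
        (u', ⟨m, zs'.zip (colsOf θ m (t.set j rest))⟩)
      ∧ Inv θ m tgt (t.set j rest) zs' u' := by
  obtain ⟨x', hx'⟩ := exists_fresh (zs ++ varsOf t ++ varsOf u)
  simp only [List.mem_append, not_or] at hx'
  obtain ⟨⟨hx'zs, hx't⟩, hx'u⟩ := hx'
  have hx'tf : Sum.inr x' ∉ t.flatten := fun h => hx't (mem_varsOf.2 h)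
  have hx'uf : Sum.inr x' ∉ u.flatten := fun h => hx'u (mem_varsOf.2 h)
  have hjz : j < zs.length := inv.len ▸ hj
  have hlE : (zs.zip (colsOf θ m t)).length = zs.length := by
    rw [List.length_zip, colsOf_length, inv.len, min_self]
  have hjE : j < (zs.zip (colsOf θ m t)).length := hlE ▸ hjz
  have hE : (zs.zip (colsOf θ m t))[j]'hjE = (zs[j]'hjz, colOf θ m (t[j]'hj)) := by
    rw [List.getElem_zip]
    exact congrArg _ (colsOf_getElem θ m t hj)
  have hstep := Step.cpre u m (zs.zip (colsOf θ m t)) j hjE a (colOf θ m rest)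
    (by rw [hE]; simp [colOf, hdec, List.map_map, Function.comp])
    x' (by rwa [List.map_fst_zip (le_of_eq (by rw [colsOf_length, inv.len]))]) hx'uf
  rw [hE] at hstep
  simp only at hstep
  rw [zip_set, ← colsOf_set] at hstep
  refine ⟨zs.set j x', _, hstep, ?_⟩
  have hlen' : (zs.set j x').length = (t.set j rest).length := by simp [inv.len]
  have hnod' : (zs.set j x').Nodup := nodup_set inv.nodup hx'zs j
  have hsub : ∀ s, s ∈ rest → s ∈ t[j]'hj := by intro s hs; rw [hdec]; exact List.mem_cons_of_mem _ hs
  refine ⟨hnod', hlen', ?_, ?_, ?_, ?_⟩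
  · intro x hx
    rcases fv_substVarTP hx with h | ⟨h, hne⟩
    · simp only [List.mem_cons, List.mem_singleton, Sum.inr.injEq] at h
      rcases h with h | h
      · exact absurd h (by simp)
      · simp only [List.not_mem_nil, or_false] at h
        cases h
        exact mem_set_self hjz
    · exact mem_set_of_mem_ne hjz (inv.fvu x h) (fun he => hne he)
  · intro x hx hmem
    have hxt : Sum.inr x ∈ t.flatten := fv_set_subset hj hsub hx
    rcases List.mem_or_eq_of_mem_set hmem with h | h
    · exact inv.disj x hxt h
    · exact hx'tf (h ▸ hxt)
  · intro x hx
    exact inv.strict x (fv_set_subset hj hsub hx)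
  · rw [← inv.eq]
    apply substVarsTP_step inv.nodup inv.len hjz
    · have h1 := assign_getElem hnod' hlen' (by simpa using hjz : j < (zs.set j x').length)
      rw [List.getElem_set_self, List.getElem_set_self] at h1
      simp only [substPat_cons_inl, substPat_cons_inr, substPat_nil, List.append_nil, h1, hdec]
    · intro l hl hlj
      have h1 := assign_getElem hnod' hlen' (by simpa using hl : l < (zs.set j x').length)
      rw [List.getElem_set_ne (fun h => hlj h.symm),
        List.getElem_set_ne (fun h => hlj h.symm)] at h1
      exact h1
    · exact inv.fvu

lemma sim_eps {θ : ℕ → V → Word A} {m : ℕ} {tgt t : TP A V} {zs : List V} {u : TP A V}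
    (inv : Inv θ m tgt t zs u) {j : ℕ} (hj : j < t.length)
    (hdec : t[j]'hj = []) :
    ∃ zs' u', Step (u, ⟨m, zs.zip (colsOf θ m t)⟩)
        (u', ⟨m, zs'.zip (colsOf θ m (t.eraseIdx j))⟩)
      ∧ Inv θ m tgt (t.eraseIdx j) zs' u' := by
  have hjz : j < zs.length := inv.len ▸ hj
  have hlE : (zs.zip (colsOf θ m t)).length = zs.length := by
    rw [List.length_zip, colsOf_length, inv.len, min_self]
  have hjE : j < (zs.zip (colsOf θ m t)).length := hlE ▸ hjz
  have hE : (zs.zip (colsOf θ m t))[j]'hjE = (zs[j]'hjz, colOf θ m (t[j]'hj)) := by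
    rw [List.getElem_zip]
    exact congrArg _ (colsOf_getElem θ m t hj)
  have hstep := Step.eps u m (zs.zip (colsOf θ m t)) j hjE
    (by rw [hE]; intro w hw; simp [colOf, hdec] at hw; exact hw.2)
  rw [hE] at hstep
  simp only at hstep
  rw [zip_eraseIdx _ _ (by rw [colsOf_length, inv.len]), ← colsOf_eraseIdx] at hstep
  refine ⟨zs.eraseIdx j, _, hstep, ?_⟩
  have hlen' : (zs.eraseIdx j).length = (t.eraseIdx j).length := by
    rw [List.length_eraseIdx, List.length_eraseIdx, inv.len]
  refine ⟨inv.nodup.eraseIdx j, hlen', ?_, ?_, ?_, ?_⟩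
  · intro x hx
    rcases fv_substVarTP hx with h | ⟨h, hne⟩
    · simp at h
    · exact mem_eraseIdx_of_mem_ne inv.nodup hjz (inv.fvu x h) hne
  · intro x hx hmem
    have hxt : Sum.inr x ∈ t.flatten := fv_eraseIdx_subset hx
    obtain ⟨i, hi, _, rfl⟩ := List.mem_eraseIdx_iff_getElem.1 hmem
    exact inv.disj _ hxt (List.getElem_mem _)
  · intro x hx
    exact inv.strict x (fv_eraseIdx_subset hx)
  · rw [← inv.eq]
    apply substVarsTP_step inv.nodup inv.len hjz
    · rw [hdec]; rfl
    · intro l hl hlj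
      exact assign_eraseIdx inv.nodup inv.len hl hlj hjz
    · exact inv.fvu

lemma sim_pre {θ : ℕ → V → Word A} {m : ℕ} {tgt t : TP A V} {zs : List V} {u : TP A V}
    (inv : Inv θ m tgt t zs u) {i j : ℕ} (hi : i < t.length) (hj : j < t.length)
    (hij : i ≠ j) {p' : Pat A V} (hdec : t[j]'hj = (t[i]'hi) ++ p')
    {y : V} (hy : Sum.inr y ∈ t[i]'hi) :
    ∃ zs' u', Step (u, ⟨m, zs.zip (colsOf θ m t)⟩)
        (u', ⟨m, zs'.zip (colsOf θ m (t.set j p'))⟩)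
      ∧ Inv θ m tgt (t.set j p') zs' u' := by
  obtain ⟨x', hx'⟩ := exists_fresh (zs ++ varsOf t ++ varsOf u)
  simp only [List.mem_append, not_or] at hx'
  obtain ⟨⟨hx'zs, hx't⟩, hx'u⟩ := hx'
  have hx'tf : Sum.inr x' ∉ t.flatten := fun h => hx't (mem_varsOf.2 h)
  have hx'uf : Sum.inr x' ∉ u.flatten := fun h => hx'u (mem_varsOf.2 h)
  have hjz : j < zs.length := inv.len ▸ hj
  have hiz : i < zs.length := inv.len ▸ hi
  have hlE : (zs.zip (colsOf θ m t)).length = zs.length := by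
    rw [List.length_zip, colsOf_length, inv.len, min_self]
  have hjE : j < (zs.zip (colsOf θ m t)).length := hlE ▸ hjz
  have hiE : i < (zs.zip (colsOf θ m t)).length := hlE ▸ hiz
  have hEj : (zs.zip (colsOf θ m t))[j]'hjE = (zs[j]'hjz, colOf θ m (t[j]'hj)) := by
    rw [List.getElem_zip]; exact congrArg _ (colsOf_getElem θ m t hj)
  have hEi : (zs.zip (colsOf θ m t))[i]'hiE = (zs[i]'hiz, colOf θ m (t[i]'hi)) := by
    rw [List.getElem_zip]; exact congrArg _ (colsOf_getElem θ m t hi)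
  have hyt : Sum.inr y ∈ t.flatten := List.mem_flatten.2 ⟨_, List.getElem_mem hi, hy⟩
  obtain ⟨i₀, hi₀m, hi₀⟩ := inv.strict y hyt
  have hstep := Step.pre u m (zs.zip (colsOf θ m t)) i j hiE hjE hij (colOf θ m p')
    (by rw [hEi]; simp)
    (by rw [hEi, hEj]; simp only; rw [hdec, colOf_append])
    (by
      rw [hEi]
      intro hall
      have hmem : substPatW (θ i₀) (t[i]'hi) ∈ colOf θ m (t[i]'hi) := by
        simp only [colOf, List.mem_map]
        exact ⟨i₀, List.mem_range.2 hi₀m, rfl⟩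
      exact substPatW_ne_nil hy hi₀ (hall _ hmem))
    x' (by rwa [List.map_fst_zip (le_of_eq (by rw [colsOf_length, inv.len]))]) hx'uf
  rw [hEi, hEj] at hstep
  simp only at hstep
  rw [zip_set, ← colsOf_set] at hstep
  refine ⟨zs.set j x', _, hstep, ?_⟩
  have hlen' : (zs.set j x').length = (t.set j p').length := by simp [inv.len]
  have hnod' : (zs.set j x').Nodup := nodup_set inv.nodup hx'zs j
  have hneij : zs[i]'hiz ≠ zs[j]'hjz := fun h => hij ((List.Nodup.getElem_inj_iff inv.nodup).1 h)
  have hsub : ∀ s, s ∈ p' → s ∈ t[j]'hj := by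
    intro s hs; rw [hdec]; exact List.mem_append_right _ hs
  refine ⟨hnod', hlen', ?_, ?_, ?_, ?_⟩
  · intro x hx
    rcases fv_substVarTP hx with h | ⟨h, hne⟩
    · simp only [List.mem_cons, List.mem_singleton, Sum.inr.injEq, List.not_mem_nil, or_false]
        at h
      rcases h with h | h
      · subst h
        exact mem_set_of_mem_ne hjz (List.getElem_mem hiz) hneij
      · cases h
        exact mem_set_self hjz
    · exact mem_set_of_mem_ne hjz (inv.fvu x h) (fun he => hne he)
  · intro x hx hmem
    have hxt : Sum.inr x ∈ t.flatten := fv_set_subset hj hsub hx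
    rcases List.mem_or_eq_of_mem_set hmem with h | h
    · exact inv.disj x hxt h
    · exact hx'tf (h ▸ hxt)
  · intro x hx
    exact inv.strict x (fv_set_subset hj hsub hx)
  · rw [← inv.eq]
    apply substVarsTP_step inv.nodup inv.len hjz
    · have h1 := assign_getElem hnod' hlen' (by simpa using hjz : j < (zs.set j x').length)
      rw [List.getElem_set_self, List.getElem_set_self] at h1
      have h2 := assign_getElem hnod' hlen' (by simpa using hiz : i < (zs.set j x').length)
      rw [List.getElem_set_ne (fun h => hij h.symm),
        List.getElem_set_ne (fun h => hij h.symm)] at h2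
      simp only [substPat_cons_inr, substPat_nil, List.append_nil, h1, h2, hdec]
    · intro l hl hlj
      have h1 := assign_getElem hnod' hlen' (by simpa using hl : l < (zs.set j x').length)
      rw [List.getElem_set_ne (fun h => hlj h.symm),
        List.getElem_set_ne (fun h => hlj h.symm)] at h1
      exact h1
    · exact inv.fvu

end Aux4
section Aux5

open List

variable {A V : Type} [DecidableEq A] [DecidableEq V] [Infinite V]

lemma set_getElem_self {t : TP A V} {j : ℕ} (hj : j < t.length) :
    t.set j (t[j]'hj) = t := by
  apply List.ext_getElem (by simp)
  intro l h1 h2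
  by_cases hlj : l = j
  · subst hlj; exact List.getElem_set_self _
  · exact List.getElem_set_ne (fun h => hlj h.symm) _

lemma sim_chain {θ : ℕ → V → Word A} {m : ℕ} {tgt : TP A V} (c : Pat A V)
    (hc : ∀ s ∈ c, ∃ a, s = Sum.inl a) :
    ∀ (t : TP A V) (zs : List V) (u : TP A V), Inv θ m tgt t zs u →
    ∀ (j : ℕ) (hj : j < t.length) (rest : Pat A V), t[j]'hj = c ++ rest →
    ∃ zs' u', Relation.ReflTransGen Step (u, ⟨m, zs.zip (colsOf θ m t)⟩)
        (u', ⟨m, zs'.zip (colsOf θ m (t.set j rest))⟩)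
      ∧ Inv θ m tgt (t.set j rest) zs' u' := by
  induction c with
  | nil =>
    intro t zs u inv j hj rest hdec
    simp only [List.nil_append] at hdec
    refine ⟨zs, u, ?_, ?_⟩
    · rw [← hdec, set_getElem_self hj]
    · rw [← hdec, set_getElem_self hj]; exact inv
  | cons s c ih =>
    intro t zs u inv j hj rest hdec
    obtain ⟨a, rfl⟩ := hc s (by simp)
    obtain ⟨zs₁, u₁, hstep, inv₁⟩ := sim_cpre inv hj (by rw [hdec]; rfl)
    have hj₁ : j < (t.set j (c ++ rest)).length := by simpa using hj
    obtain ⟨zs', u', hrun, inv'⟩ := ih (fun s hs => hc s (by simp [hs]))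
      (t.set j (c ++ rest)) zs₁ u₁ inv₁ j hj₁ rest (List.getElem_set_self _)
    rw [List.set_set] at hrun inv'
    exact ⟨zs', u', Relation.ReflTransGen.head hstep hrun, inv'⟩

lemma sim_step {θ : ℕ → V → Word A} {m : ℕ} {tgt : TP A V} {t t' : TP A V}
    (h : PStep t t') {zs : List V} {u : TP A V} (inv : Inv θ m tgt t zs u) :
    ∃ zs' u', Relation.ReflTransGen Step (u, ⟨m, zs.zip (colsOf θ m t)⟩)
        (u', ⟨m, zs'.zip (colsOf θ m t')⟩)
      ∧ Inv θ m tgt t' zs' u' := by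
  cases h with
  | pre i j hi hj hij p' hdec hne =>
    rcases Classical.em (∃ y, Sum.inr y ∈ t[i]'hi) with hvar | hvar
    · obtain ⟨y, hy⟩ := hvar
      obtain ⟨zs', u', hstep, inv'⟩ := sim_pre inv hi hj hij hdec hy
      exact ⟨zs', u', Relation.ReflTransGen.single hstep, inv'⟩
    · push_neg at hvar
      apply sim_chain (t[i]'hi) ?_ t zs u inv j hj p' hdec
      intro s hs
      cases s with
      | inl a => exact ⟨a, rfl⟩
      | inr y => exact absurd hs (hvar y)
  | cpre j hj a p' hdec =>
    obtain ⟨zs', u', hstep, inv'⟩ := sim_cpre inv hj hdec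
    exact ⟨zs', u', Relation.ReflTransGen.single hstep, inv'⟩
  | eps j hj heps =>
    obtain ⟨zs', u', hstep, inv'⟩ := sim_eps inv hj heps
    exact ⟨zs', u', Relation.ReflTransGen.single hstep, inv'⟩

lemma sim_run {θ : ℕ → V → Word A} {m : ℕ} {tgt : TP A V} {t tf : TP A V}
    (h : Relation.ReflTransGen PStep t tf) :
    ∀ (zs : List V) (u : TP A V), Inv θ m tgt t zs u →
    ∃ zs' u', Relation.ReflTransGen Step (u, ⟨m, zs.zip (colsOf θ m t)⟩)
        (u', ⟨m, zs'.zip (colsOf θ m tf)⟩)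
      ∧ Inv θ m tgt tf zs' u' := by
  induction h using Relation.ReflTransGen.head_induction_on with
  | refl => exact fun zs u inv => ⟨zs, u, Relation.ReflTransGen.refl, inv⟩
  | head hstep _ ih =>
    intro zs u inv
    obtain ⟨zs₁, u₁, run1, inv₁⟩ := sim_step hstep inv
    obtain ⟨zs', u', run2, inv'⟩ := ih zs₁ u₁ inv₁
    exact ⟨zs', u', run1.trans run2, inv'⟩

end Aux5
section Aux6

open List

variable {A V : Type}

lemma renameTP_comp (ρ σ : V → V) (t : TP A V) :
    renameTP ρ (renameTP σ t) = renameTP (fun x => ρ (σ x)) t := by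
  unfold renameTP
  rw [List.map_map]
  apply List.map_congr_left
  intro p _
  simp only [Function.comp_apply, List.map_map]
  apply List.map_congr_left
  intro s _
  cases s <;> rfl

lemma renameTP_trivTP (ρ : V → V) (ys : List V) :
    renameTP ρ (trivTP ys : TP A V) = trivTP (ys.map ρ) := by
  unfold renameTP trivTP
  rw [List.map_map, List.map_map]
  rfl

lemma fv_renameTP {ρ : V → V} {t : TP A V} {x : V}
    (h : Sum.inr x ∈ (renameTP ρ t).flatten) :
    ∃ y, Sum.inr y ∈ t.flatten ∧ x = ρ y := by
  rw [List.mem_flatten] at h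
  obtain ⟨l, hl, hxl⟩ := h
  rw [renameTP, List.mem_map] at hl
  obtain ⟨p, hp, rfl⟩ := hl
  rw [List.mem_map] at hxl
  obtain ⟨s, hs, hsx⟩ := hxl
  cases s with
  | inl a => simp at hsx
  | inr y =>
    simp only [Sum.map_inr, id_eq, Sum.inr.injEq] at hsx
    exact ⟨y, List.mem_flatten.2 ⟨p, hp, hs⟩, hsx.symm⟩

lemma PStep_rename (ρ : V → V) {t t' : TP A V} (h : PStep t t') :
    PStep (renameTP ρ t) (renameTP ρ t') := by
  cases h with
  | pre i j hi hj hij p' hdec hne =>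
    have hi' : i < (renameTP ρ t).length := by simpa [renameTP] using hi
    have hj' : j < (renameTP ρ t).length := by simpa [renameTP] using hj
    have hstep := PStep.pre (renameTP ρ t) i j hi' hj' hij (p'.map (Sum.map id ρ))
      (by simp [renameTP, hdec]) (by simp [renameTP, hne])
    have : (renameTP ρ t).set j (p'.map (Sum.map id ρ)) = renameTP ρ (t.set j p') := by
      simp [renameTP, List.map_set]
    rwa [this] at hstep
  | cpre j hj a p' hdec =>
    have hj' : j < (renameTP ρ t).length := by simpa [renameTP] using hj
    have hstep := PStep.cpre (renameTP ρ t) j hj' a (p'.map (Sum.map id ρ))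
      (by simp [renameTP, hdec])
    have : (renameTP ρ t).set j (p'.map (Sum.map id ρ)) = renameTP ρ (t.set j p') := by
      simp [renameTP, List.map_set]
    rwa [this] at hstep
  | eps j hj heps =>
    have hj' : j < (renameTP ρ t).length := by simpa [renameTP] using hj
    have hstep := PStep.eps (renameTP ρ t) j hj' (by simp [renameTP, heps])
    have : (renameTP ρ t).eraseIdx j = renameTP ρ (t.eraseIdx j) := by
      simp [renameTP, map_eraseIdx]
    rwa [this] at hstep

lemma le_foldr_max {l : List ℕ} {a : ℕ} (h : a ∈ l) : a ≤ l.foldr max 0 := by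
  induction l with
  | nil => simp at h
  | cons b l ih =>
    rcases List.mem_cons.1 h with rfl | h
    · exact le_max_left _ _
    · exact le_trans (ih h) (le_max_right _ _)

lemma exists_inj_avoid [Countable V] [Infinite V] (L : List V) :
    ∃ ρ : V → V, Function.Injective ρ ∧ ∀ x, ρ x ∉ L := by
  obtain ⟨dV⟩ := nonempty_denumerable V
  let e : V ≃ ℕ := @Denumerable.eqv V dV
  refine ⟨fun x => e.symm (e x + ((L.map e).foldr max 0 + 1)), ?_, ?_⟩
  · intro a b hab
    have h1 := congrArg e hab
    simp only [Equiv.apply_symm_apply] at h1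
    exact e.injective (by omega)
  · intro x hmem
    have h1 : (e (e.symm (e x + ((L.map e).foldr max 0 + 1))) : ℕ)
        = e x + ((L.map e).foldr max 0 + 1) := by simp
    have h2 : (e (e.symm (e x + ((L.map e).foldr max 0 + 1))) : ℕ) ≤ (L.map e).foldr max 0 :=
      le_foldr_max (List.mem_map.2 ⟨_, hmem, rfl⟩)
    omega

end Aux6
/-- **Completeness of the inference algorithm.**
If `M ⊨ₛ t` for a solvable tuple pattern `t` of arity `n`, then
`((x₁,…,xₙ), [M/x⃗]) ⟶* (t, Θ)` for some `Θ`, where `t` is identified up to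
(injective) renaming of its variables. -/
theorem completeness
    [DecidableEq A] [DecidableEq V] [Nontrivial A] [Countable V] [Infinite V]
    (xs : List V) (hxs : xs.Nodup) (M : Data A) (m : ℕ)
    (hMn : M.length = xs.length) (hcols : ∀ c ∈ M, c.length = m)
    (t : TP A V) (harity : t.length = xs.length) (hsolv : Solvable t)
    (hM : SModels M m t) :
    ∃ (ρ : V → V) (Θ : DSub A V), Function.Injective ρ ∧
      Relation.ReflTransGen Step (trivTP xs, ⟨m, xs.zip M⟩) (renameTP ρ t, Θ) := by
  obtain ⟨ys, hys, hred⟩ := hsolv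
  obtain ⟨Θ₀, hΘm, hWF, happ, hstrict⟩ := hM
  -- the fixed row substitutions
  have hMcols : M = colsOf Θ₀.rowSub m t := by
    rw [← happ]
    unfold DSub.apply colsOf colOf
    rw [hΘm]
  have hstrict' : ∀ x, Sum.inr x ∈ t.flatten → ∃ i, i < m ∧ Θ₀.rowSub i x ≠ [] := by
    intro x hx
    have h1 : ¬ allEps (lookupCol Θ₀.entries x) := hstrict x hx
    cases hfind : Θ₀.entries.find? (fun e => decide (e.1 = x)) with
    | none =>
      exfalso
      apply h1
      intro w hw
      rw [lookupCol, hfind] at hw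
      simp at hw
    | some e =>
      have hce : lookupCol Θ₀.entries x = e.2 := by rw [lookupCol, hfind]
      have hclen : e.2.length = m := by
        rw [← hΘm]; exact hWF.2 e (List.mem_of_find?_eq_some hfind)
      rw [hce] at h1
      unfold allEps at h1
      push_neg at h1
      obtain ⟨w, hw, hwne⟩ := h1
      obtain ⟨i, hi, rfl⟩ := List.getElem_of_mem hw
      refine ⟨i, hclen ▸ hi, ?_⟩
      show (lookupCol Θ₀.entries x).getD i [] ≠ []
      rw [hce, List.getD_eq_getElem _ _ hi]
      exact hwne
  -- rename t away from xs
  obtain ⟨ρ₀, hρ₀inj, hρ₀av⟩ := exists_inj_avoid (V := V) xs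
  set t₁ := renameTP ρ₀ t with ht₁
  set θ₁ : ℕ → V → Word A := fun i y => Θ₀.rowSub i (Function.invFun ρ₀ y) with hθ₁def
  have hθ₁ : ∀ i x, θ₁ i (ρ₀ x) = Θ₀.rowSub i x := by
    intro i x
    simp only [hθ₁def]
    rw [Function.leftInverse_invFun hρ₀inj x]
  have hcols1 : colsOf θ₁ m t₁ = colsOf Θ₀.rowSub m t := by
    unfold colsOf colOf
    rw [ht₁, renameTP, List.map_map]
    apply List.map_congr_left
    intro p _
    simp only [Function.comp_apply]
    apply List.map_congr_left
    intro i _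
    rw [substPatW_rename]
    exact congrArg (fun f => substPatW f p) (funext (hθ₁ i))
  set ys₁ := ys.map ρ₀ with hys₁def
  have hys₁ : ys₁.Nodup := hys.map hρ₀inj
  have hred₁ : Relation.ReflTransGen PStep t₁ (trivTP ys₁) := by
    rw [hys₁def, ← renameTP_trivTP]
    exact Relation.ReflTransGen.lift _ (fun a b h => PStep_rename ρ₀ h) _ _ hred
  have hlen1 : xs.length = t₁.length := by simp [ht₁, renameTP, harity]
  -- initial invariant
  have inv0 : Inv θ₁ m t₁ t₁ xs (trivTP xs) := by
    refine ⟨hxs, hlen1, ?_, ?_, ?_, ?_⟩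
    · intro x hx
      rw [List.mem_flatten] at hx
      obtain ⟨l, hl, hxl⟩ := hx
      rw [trivTP, List.mem_map] at hl
      obtain ⟨z, hz, rfl⟩ := hl
      simp only [List.mem_singleton, Sum.inr.injEq] at hxl
      exact hxl ▸ hz
    · intro x hx hmem
      obtain ⟨y, hy, rfl⟩ := fv_renameTP hx
      exact hρ₀av y hmem
    · intro x hx
      obtain ⟨y, hy, rfl⟩ := fv_renameTP hx
      obtain ⟨i, hi, hne⟩ := hstrict' y hy
      exact ⟨i, hi, by rw [hθ₁]; exact hne⟩
    · apply List.ext_getElem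
      · simp [substVarsTP, trivTP, hlen1]
      · intro l h1 h2
        have hlx : l < xs.length := by simpa [substVarsTP, trivTP] using h1
        have e1 : (substVarsTP xs t₁ (trivTP xs))[l]'h1
            = substVars xs t₁ [Sum.inr (xs[l]'hlx)] := by
          simp [substVarsTP, trivTP]
        rw [e1, substVars_eq_substPat]
        simp only [substPat_cons_inr, substPat_nil, List.append_nil]
        exact assign_getElem hxs hlen1 hlx
  obtain ⟨zs', u', hrun, inv'⟩ := sim_run hred₁ xs (trivTP xs) inv0
  rw [hcols1, ← hMcols] at hrun
  have hlen' : zs'.length = ys₁.length := by simpa [trivTP] using inv'.len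
  -- the tuple reached is a renaming of t₁
  have hfvu' : ∀ x, Sum.inr x ∈ u'.flatten → x ∈ zs' := inv'.fvu
  have ht₁eq : t₁ = renameTP (fun z => ys₁.getD (zs'.idxOf z) z) u' := by
    rw [← inv'.eq]
    unfold substVarsTP renameTP
    apply List.map_congr_left
    intro p hp
    rw [substVars_eq_substPat]
    apply substPat_singles
    intro x hx
    have hxzs : x ∈ zs' := hfvu' x (List.mem_flatten.2 ⟨p, hp, hx⟩)
    obtain ⟨l, hl, rfl⟩ := List.getElem_of_mem hxzs
    have hidx : zs'.idxOf (zs'[l]'hl) = l := List.Nodup.idxOf_getElem inv'.nodup l hl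
    have hly : l < ys₁.length := hlen' ▸ hl
    have hltriv : l < (trivTP ys₁ : TP A V).length := by simpa [trivTP] using hly
    have e1 : assign zs' (trivTP ys₁) (zs'[l]'hl) = (trivTP ys₁ : TP A V)[l]'hltriv :=
      assign_getElem inv'.nodup (by simp [trivTP, hlen']) hl
    rw [e1]
    have e2 : (trivTP ys₁ : TP A V)[l]'hltriv = [Sum.inr (ys₁[l]'hly)] := by
      simp [trivTP]
    rw [e2, hidx, List.getD_eq_getElem _ _ hly]
  -- build the final injective renaming
  obtain ⟨sh, hshinj, hshav⟩ := exists_inj_avoid (V := V) zs'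
  set ρ₁ : V → V := fun x => if x ∈ ys₁ then zs'.getD (ys₁.idxOf x) (sh x) else sh x with hρ₁def
  have hρ₁ys : ∀ (l : ℕ) (hl : l < ys₁.length), ρ₁ (ys₁[l]'hl) = zs'[l]'(hlen' ▸ hl) := by
    intro l hl
    have hmem : ys₁[l]'hl ∈ ys₁ := List.getElem_mem hl
    have hidx : ys₁.idxOf (ys₁[l]'hl) = l := List.Nodup.idxOf_getElem hys₁ l hl
    simp only [hρ₁def, if_pos hmem, hidx]
    exact List.getD_eq_getElem _ _ (hlen' ▸ hl)
  have hρ₁inj : Function.Injective ρ₁ := by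
    intro a b hab
    simp only [hρ₁def] at hab
    by_cases ha : a ∈ ys₁ <;> by_cases hb : b ∈ ys₁
    · rw [if_pos ha, if_pos hb] at hab
      have hia : ys₁.idxOf a < ys₁.length := List.idxOf_lt_length_iff.2 ha
      have hib : ys₁.idxOf b < ys₁.length := List.idxOf_lt_length_iff.2 hb
      rw [List.getD_eq_getElem _ _ (hlen' ▸ hia), List.getD_eq_getElem _ _ (hlen' ▸ hib)] at hab
      have := (List.Nodup.getElem_inj_iff inv'.nodup).1 hab
      have ha' : ys₁[ys₁.idxOf a]'hia = a := List.getElem_idxOf hia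
      have hb' : ys₁[ys₁.idxOf b]'hib = b := List.getElem_idxOf hib
      rw [← ha', ← hb']
      simp only [this]
    · rw [if_pos ha, if_neg hb] at hab
      have hia : ys₁.idxOf a < ys₁.length := List.idxOf_lt_length_iff.2 ha
      rw [List.getD_eq_getElem _ _ (hlen' ▸ hia)] at hab
      exact absurd (hab ▸ List.getElem_mem _) (hshav b)
    · rw [if_neg ha, if_pos hb] at hab
      have hib : ys₁.idxOf b < ys₁.length := List.idxOf_lt_length_iff.2 hb
      rw [List.getD_eq_getElem _ _ (hlen' ▸ hib)] at hab
      exact absurd (hab ▸ List.getElem_mem _) (hshav a)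
    · rw [if_neg ha, if_neg hb] at hab
      exact hshinj hab
  have hren : renameTP ρ₁ t₁ = u' := by
    rw [ht₁eq, renameTP_comp]
    unfold renameTP
    have hid : ∀ p ∈ u', p.map (Sum.map id
        (fun z => ρ₁ (ys₁.getD (zs'.idxOf z) z))) = p := by
      intro p hp
      apply map_rename_id
      intro x hx
      have hxzs : x ∈ zs' := hfvu' x (List.mem_flatten.2 ⟨p, hp, hx⟩)
      obtain ⟨l, hl, rfl⟩ := List.getElem_of_mem hxzs
      have hidx : zs'.idxOf (zs'[l]'hl) = l := List.Nodup.idxOf_getElem inv'.nodup l hl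
      have hly : l < ys₁.length := hlen' ▸ hl
      rw [hidx, List.getD_eq_getElem _ _ hly, hρ₁ys l hly]
    calc u'.map (fun p => p.map (Sum.map id (fun z => ρ₁ (ys₁.getD (zs'.idxOf z) z))))
        = u'.map id := List.map_congr_left (fun p hp => hid p hp)
      _ = u' := List.map_id u'
  refine ⟨fun x => ρ₁ (ρ₀ x), ⟨m, zs'.zip (colsOf θ₁ m (trivTP ys₁))⟩,
    hρ₁inj.comp hρ₀inj, ?_⟩
  have : renameTP (fun x => ρ₁ (ρ₀ x)) t = u' := by
    rw [← renameTP_comp, ← ht₁, hren]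
  rw [this]
  exact hrun

end STPaper
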